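/- arXiv:2203.13908 — 7 statements merged into one kernel-verified Lean document; each statement's English description precedes it below -/
import Mathlib

section
/- Let V be a separable Hilbert space over ℂ, N, m ∈ ℕ, and A ∈ ℂ^{m×N} a matrix, extended to a linear operator V^N → V^m by (Ax)_i = ∑_{j=1}^N a_{ij} x_j. Let w = (w_i)_{i=1}^N be positive weights and k > 0. Then A satisfies the weighted restricted isometry property over ℂ of order (k,w) with constant 0 < δ < 1 (i.e., (1-δ)‖z‖₂² ≤ ‖Az‖₂² ≤ (1+δ)‖z‖₂² for all z ∈ ℂ^N with |supp(z)|_w ≤ k) if and only if the induced operator on V^N satisfies (1-δ)‖x‖²_{2;V} ≤ ‖Ax‖²_{2;V} ≤ (1+δ)‖x‖²_{2;V} for all x ∈ V^N with |supp(x)|_w ≤ k, where ‖x‖²_{2;V} = ∑_i ‖x_i‖_V² and supp(x) = {i : x_i ≠ 0}. -/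
/-- A vector `x` is weighted `(k,w)`-sparse: its support has weighted cardinality
at most `k` (expressed via a finite superset of the support). -/
def WSparse {ι : Type*} [Fintype ι] {V : Type*} [NormedAddCommGroup V]
    (k : ℝ) (w : ι → ℝ) (x : ι → V) : Prop :=
  ∃ S : Finset ι, (∑ i ∈ S, w i ^ 2) ≤ k ∧ ∀ i, x i ≠ 0 → i ∈ S

section Aux

variable {V : Type*} [NormedAddCommGroup V] [InnerProductSpace ℂ V] [CompleteSpace V]
  {ι : Type*}

lemma hb_norm_sq (b : HilbertBasis ι ℂ V) (v : V) :
    ‖v‖ ^ 2 = ∑' μ, ‖b.repr v μ‖ ^ 2 := by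
  have h2 : (0:ℝ) < (2 : ENNReal).toReal := by norm_num
  have h := lp.norm_rpow_eq_tsum h2 (b.repr v)
  rw [b.repr.norm_map] at h
  have : ((2 : ENNReal).toReal) = (2 : ℝ) := by norm_num
  rw [this] at h
  calc ‖v‖ ^ 2 = ‖v‖ ^ (2:ℝ) := by rw [← Real.rpow_natCast ‖v‖ 2]; norm_num
    _ = ∑' μ, ‖b.repr v μ‖ ^ (2:ℝ) := h
    _ = ∑' μ, ‖b.repr v μ‖ ^ 2 := tsum_congr fun μ => by
        rw [← Real.rpow_natCast ‖b.repr v μ‖ 2]; norm_num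

lemma hb_summable (b : HilbertBasis ι ℂ V) (v : V) :
    Summable fun μ => ‖b.repr v μ‖ ^ 2 := by
  have h2 : (0:ℝ) < (2 : ENNReal).toReal := by norm_num
  have h := (lp.memℓp (b.repr v)).summable h2
  have he : ((2 : ENNReal).toReal) = (2 : ℝ) := by norm_num
  rw [he] at h
  refine h.congr fun μ => ?_
  rw [← Real.rpow_natCast ‖b.repr v μ‖ 2]; norm_num

end Aux

/-- The weighted RIP over `ℂ` of order `(k,w)` with constant `δ` holds for a matrix
`A` if and only if the induced operator on `V^N` (for `V` a separable Hilbert space)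
satisfies the weighted RIP over `V` with the same constant. -/
theorem wRIP_C_iff_wRIP_V {V : Type*} [NormedAddCommGroup V] [InnerProductSpace ℂ V]
    [CompleteSpace V] [Nontrivial V] [TopologicalSpace.SeparableSpace V]
    {N m : ℕ} (A : Matrix (Fin m) (Fin N) ℂ)
    (w : Fin N → ℝ) (hw : ∀ i, 0 < w i) (k : ℝ) (hk : 0 < k)
    (δ : ℝ) (hδ0 : 0 < δ) (hδ1 : δ < 1) :
    (∀ z : Fin N → ℂ, WSparse k w z →
        (1 - δ) * (∑ j, ‖z j‖ ^ 2) ≤ (∑ i, ‖∑ j, A i j * z j‖ ^ 2) ∧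
        (∑ i, ‖∑ j, A i j * z j‖ ^ 2) ≤ (1 + δ) * (∑ j, ‖z j‖ ^ 2)) ↔
      (∀ x : Fin N → V, WSparse k w x →
        (1 - δ) * (∑ j, ‖x j‖ ^ 2) ≤ (∑ i, ‖∑ j, A i j • x j‖ ^ 2) ∧
        (∑ i, ‖∑ j, A i j • x j‖ ^ 2) ≤ (1 + δ) * (∑ j, ‖x j‖ ^ 2)) := by
  constructor
  · intro hC x hx
    obtain ⟨S, hS, hsupp⟩ := hx
    obtain ⟨ιb, b, -⟩ := exists_hilbertBasis ℂ V
    set c : Fin N → ιb → ℂ := fun j μ => b.repr (x j) μ with hc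
    set y : Fin m → V := fun i => ∑ j, A i j • x j with hy
    have hyrepr : ∀ i μ, b.repr (y i) μ = ∑ j, A i j * c j μ := by
      intro i μ
      simp only [hy, hc, b.repr_apply_apply, inner_sum, inner_smul_right]
    have hzsp : ∀ μ, WSparse k w (fun j => c j μ) := by
      intro μ
      refine ⟨S, hS, fun j hj => hsupp j ?_⟩
      intro h0
      exact hj (by simp [hc, h0])
    have hz : ∀ μ, (1 - δ) * (∑ j, ‖c j μ‖ ^ 2) ≤ (∑ i, ‖∑ j, A i j * c j μ‖ ^ 2) ∧
        (∑ i, ‖∑ j, A i j * c j μ‖ ^ 2) ≤ (1 + δ) * (∑ j, ‖c j μ‖ ^ 2) :=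
      fun μ => hC (fun j => c j μ) (hzsp μ)
    have hxsum : ∀ j, Summable fun μ => ‖c j μ‖ ^ 2 := fun j => hb_summable b (x j)
    have hysum : ∀ i, Summable fun μ => ‖∑ j, A i j * c j μ‖ ^ 2 := fun i =>
      (hb_summable b (y i)).congr fun μ => by rw [hyrepr]
    have hXs : Summable fun μ => ∑ j, ‖c j μ‖ ^ 2 := summable_sum fun j _ => hxsum j
    have hYs : Summable fun μ => ∑ i, ‖∑ j, A i j * c j μ‖ ^ 2 :=
      summable_sum fun i _ => hysum i
    have hX : (∑ j, ‖x j‖ ^ 2) = ∑' μ, ∑ j, ‖c j μ‖ ^ 2 := by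
      rw [Summable.tsum_finsetSum fun j _ => hxsum j]
      exact Finset.sum_congr rfl fun j _ => hb_norm_sq b (x j)
    have hY : (∑ i, ‖y i‖ ^ 2) = ∑' μ, ∑ i, ‖∑ j, A i j * c j μ‖ ^ 2 := by
      rw [Summable.tsum_finsetSum fun i _ => hysum i]
      refine Finset.sum_congr rfl fun i _ => ?_
      rw [hb_norm_sq b (y i)]
      exact tsum_congr fun μ => by rw [hyrepr]
    constructor
    · calc (1 - δ) * (∑ j, ‖x j‖ ^ 2)
          = ∑' μ, (1 - δ) * ∑ j, ‖c j μ‖ ^ 2 := by rw [hX, tsum_mul_left]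
        _ ≤ ∑' μ, ∑ i, ‖∑ j, A i j * c j μ‖ ^ 2 :=
            Summable.tsum_le_tsum (fun μ => (hz μ).1) (hXs.mul_left _) hYs
        _ = ∑ i, ‖y i‖ ^ 2 := hY.symm
    · calc (∑ i, ‖y i‖ ^ 2)
          = ∑' μ, ∑ i, ‖∑ j, A i j * c j μ‖ ^ 2 := hY
        _ ≤ ∑' μ, (1 + δ) * ∑ j, ‖c j μ‖ ^ 2 :=
            Summable.tsum_le_tsum (fun μ => (hz μ).2) hYs (hXs.mul_left _)
        _ = (1 + δ) * (∑ j, ‖x j‖ ^ 2) := by rw [hX, tsum_mul_left]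
  · intro hV z hz
    obtain ⟨S, hS, hsupp⟩ := hz
    obtain ⟨v, hv⟩ := exists_ne (0 : V)
    set u : V := ‖v‖⁻¹ • v with hu'
    have hu : ‖u‖ = 1 := norm_smul_inv_norm hv
    have hu0 : u ≠ 0 := by
      intro h; rw [h, norm_zero] at hu; norm_num at hu
    have hsp : WSparse k w (fun j => z j • u) := by
      refine ⟨S, hS, fun j hj => hsupp j ?_⟩
      intro h0
      exact hj (by simp [h0])
    have h := hV (fun j => z j • u) hsp
    have h1 : ∀ j, ‖z j • u‖ ^ 2 = ‖z j‖ ^ 2 := by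
      intro j; rw [norm_smul, hu, mul_one]
    have h2 : ∀ i, ‖∑ j, A i j • (z j • u)‖ ^ 2 = ‖∑ j, A i j * z j‖ ^ 2 := by
      intro i
      have : (∑ j, A i j • (z j • u)) = (∑ j, A i j * z j) • u := by
        rw [Finset.sum_smul]
        exact Finset.sum_congr rfl fun j _ => smul_smul _ _ _
      rw [this, norm_smul, hu, mul_one]
    simpa only [h1, h2] using h
end

section
/- Let V be a separable Hilbert space, and suppose A ∈ B(V^N, V^m) has the weighted robust null space property over V of order (k,w) with constants 0 < ρ < 1 and γ > 0, i.e., ‖x_S‖_{2;V} ≤ ρ ‖x_{S^c}‖_{1,w;V}/√k + γ‖Ax‖_{2;V} for all x ∈ V^N and all S ⊆ {1,...,N} with |S|_w ≤ k. Then for all x, z ∈ V^N, ‖z - x‖_{1,w;V} ≤ ((1+ρ)/(1-ρ))(2σ_k(x)_{1,w;V} + ‖z‖_{1,w;V} − ‖x‖_{1,w;V}) + (2γ/(1-ρ))√k ‖A(z−x)‖_{2;V}. -/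
/-- The `ℓ²`-norm of a `V`-valued vector: `‖x‖_{2;V} = (∑ i ‖x i‖²)^{1/2}`. -/
noncomputable def l2norm {ι : Type*} [Fintype ι] {V : Type*} [NormedAddCommGroup V]
    (x : ι → V) : ℝ := Real.sqrt (∑ i, ‖x i‖ ^ 2)

/-- The weighted `ℓ¹_w`-norm of a `V`-valued vector: `‖x‖_{1,w;V} = ∑ i w i ‖x i‖`. -/
noncomputable def l1wnorm {ι : Type*} [Fintype ι] {V : Type*} [NormedAddCommGroup V]
    (w : ι → ℝ) (x : ι → V) : ℝ := ∑ i, w i * ‖x i‖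

/-- Weighted best `(k,w)`-term approximation error in the `ℓ¹_w`-norm:
`σ_k(x)_{1,w;V} = inf { ‖x − x_S‖_{1,w;V} : |S|_w ≤ k }`. -/
noncomputable def sigmaK {ι : Type*} [Fintype ι] [DecidableEq ι] {V : Type*} [NormedAddCommGroup V]
    (k : ℝ) (w : ι → ℝ) (x : ι → V) : ℝ :=
  sInf {r : ℝ | ∃ S : Finset ι, (∑ i ∈ S, w i ^ 2) ≤ k ∧
    r = l1wnorm w fun i => if i ∈ S then 0 else x i}

/-- The weighted robust null space property over `V` of order `(k,w)` with
constants `ρ` and `γ`. -/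
def wRNSP {N m : ℕ} {V : Type*} [NormedAddCommGroup V] [InnerProductSpace ℂ V]
    (A : (Fin N → V) →L[ℂ] (Fin m → V)) (k : ℝ) (w : Fin N → ℝ) (ρ γ : ℝ) : Prop :=
  ∀ (x : Fin N → V) (S : Finset (Fin N)), (∑ i ∈ S, w i ^ 2) ≤ k →
    l2norm (fun i => if i ∈ S then x i else 0) ≤
      ρ * l1wnorm w (fun i => if i ∈ S then 0 else x i) / Real.sqrt k +
        γ * l2norm (A x)

/-!
Let `S` realise `σ_k(x)` and `v = z - x`. Cauchy–Schwarz over `S` (where `∑_S w_i² ≤ k`) and the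
null space property give `‖v_S‖_{1,w} ≤ ρ ‖v_{Sᶜ}‖_{1,w} + γ √k ‖A v‖`, while the triangle inequality
gives the cone condition `‖v_{Sᶜ}‖_{1,w} ≤ ‖z‖_{1,w} - ‖x‖_{1,w} + ‖v_S‖_{1,w} + 2 σ_k(x)`.
Eliminating `‖v_S‖_{1,w}` bounds `‖v_{Sᶜ}‖_{1,w}`, and hence `‖v‖_{1,w}`.
-/

open Finset

section Restriction

variable {ι V : Type*} [Fintype ι] [DecidableEq ι] [NormedAddCommGroup V]

theorem l1wnorm_eq_sum_add_sum_compl (w : ι → ℝ) (x : ι → V) (S : Finset ι) :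
    l1wnorm w x = ∑ i ∈ S, w i * ‖x i‖ + ∑ i ∈ Sᶜ, w i * ‖x i‖ :=
  (sum_add_sum_compl S _).symm

theorem l1wnorm_ite_zero (w : ι → ℝ) (x : ι → V) (S : Finset ι) :
    l1wnorm w (fun i => if i ∈ S then 0 else x i) = ∑ i ∈ Sᶜ, w i * ‖x i‖ := by
  rw [l1wnorm, ← sum_add_sum_compl S, sum_eq_zero fun i hi => by simp [hi], zero_add]
  exact sum_congr rfl fun i hi => by simp [mem_compl.mp hi]

theorem l2norm_ite_zero (x : ι → V) (S : Finset ι) :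
    l2norm (fun i => if i ∈ S then x i else 0) = Real.sqrt (∑ i ∈ S, ‖x i‖ ^ 2) := by
  have off_S : ∑ i ∈ Sᶜ, ‖if i ∈ S then x i else 0‖ ^ 2 = 0 :=
    sum_eq_zero fun i hi => by simp [mem_compl.mp hi]
  rw [l2norm, ← sum_add_sum_compl S, off_S, add_zero]
  exact congrArg _ (sum_congr rfl fun i hi => by simp [hi])

theorem exists_sigmaK_eq_sum_compl (k : ℝ) (hk : 0 ≤ k) (w : ι → ℝ) (x : ι → V) :
    ∃ S : Finset ι, ∑ i ∈ S, w i ^ 2 ≤ k ∧ sigmaK k w x = ∑ i ∈ Sᶜ, w i * ‖x i‖ := by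
  set R := {r : ℝ | ∃ S : Finset ι, ∑ i ∈ S, w i ^ 2 ≤ k ∧
    r = l1wnorm w fun i => if i ∈ S then 0 else x i}
  have hfin : R.Finite := (Set.finite_range fun S : Finset ι =>
    l1wnorm w fun i => if i ∈ S then 0 else x i).subset (by rintro r ⟨S, -, rfl⟩; exact ⟨S, rfl⟩)
  have hne : R.Nonempty := ⟨_, ∅, by simpa using hk, rfl⟩
  obtain ⟨S, hS, hσ⟩ := hne.csInf_mem hfin
  exact ⟨S, hS, by rw [sigmaK, hσ, l1wnorm_ite_zero]⟩

theorem sum_mul_norm_le_sqrt_mul_l2norm (k : ℝ) (w : ι → ℝ) (x : ι → V) (S : Finset ι)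
    (hS : ∑ i ∈ S, w i ^ 2 ≤ k) :
    ∑ i ∈ S, w i * ‖x i‖ ≤ Real.sqrt k * l2norm (fun i => if i ∈ S then x i else 0) :=
  calc ∑ i ∈ S, w i * ‖x i‖
      ≤ Real.sqrt (∑ i ∈ S, w i ^ 2) * Real.sqrt (∑ i ∈ S, ‖x i‖ ^ 2) :=
        Real.sum_mul_le_sqrt_mul_sqrt S w fun i => ‖x i‖
    _ ≤ Real.sqrt k * l2norm (fun i => if i ∈ S then x i else 0) := by
        rw [l2norm_ite_zero]
        gcongr

theorem sum_compl_mul_norm_sub_le {w : ι → ℝ} (hw : ∀ i, 0 ≤ w i) (S : Finset ι)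
    (x z : ι → V) :
    ∑ i ∈ Sᶜ, w i * ‖z i - x i‖ ≤
      l1wnorm w z - l1wnorm w x + ∑ i ∈ S, w i * ‖z i - x i‖ + 2 * ∑ i ∈ Sᶜ, w i * ‖x i‖ := by
  have on_S : ∑ i ∈ S, w i * ‖x i‖ ≤ ∑ i ∈ S, (w i * ‖z i‖ + w i * ‖z i - x i‖) :=
    sum_le_sum fun i _ => by
      rw [← mul_add]
      exact mul_le_mul_of_nonneg_left (norm_le_norm_add_norm_sub (z i) (x i)) (hw i)
  have off_S : ∑ i ∈ Sᶜ, w i * ‖z i - x i‖ ≤ ∑ i ∈ Sᶜ, (w i * ‖z i‖ + w i * ‖x i‖) :=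
    sum_le_sum fun i _ => by
      rw [← mul_add]
      exact mul_le_mul_of_nonneg_left (norm_sub_le _ _) (hw i)
  rw [sum_add_distrib] at on_S off_S
  rw [l1wnorm_eq_sum_add_sum_compl w z S, l1wnorm_eq_sum_add_sum_compl w x S]
  linarith

end Restriction

theorem wRNSP.sum_mul_norm_le {V : Type*} [NormedAddCommGroup V] [InnerProductSpace ℂ V]
    {N m : ℕ} {A : (Fin N → V) →L[ℂ] (Fin m → V)} {k : ℝ} {w : Fin N → ℝ} {ρ γ : ℝ}
    (h : wRNSP A k w ρ γ) (hk : 0 < k) (v : Fin N → V) (S : Finset (Fin N))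
    (hS : ∑ i ∈ S, w i ^ 2 ≤ k) :
    ∑ i ∈ S, w i * ‖v i‖ ≤ ρ * ∑ i ∈ Sᶜ, w i * ‖v i‖ + γ * Real.sqrt k * l2norm (A v) := by
  have hsqrt : 0 < Real.sqrt k := Real.sqrt_pos.mpr hk
  calc ∑ i ∈ S, w i * ‖v i‖
      ≤ Real.sqrt k * l2norm (fun i => if i ∈ S then v i else 0) :=
        sum_mul_norm_le_sqrt_mul_l2norm k w v S hS
    _ ≤ Real.sqrt k * ((ρ * ∑ i ∈ Sᶜ, w i * ‖v i‖) / Real.sqrt k + γ * l2norm (A v)) := by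
        have hrnsp := h v S hS
        rw [l1wnorm_ite_zero] at hrnsp
        exact mul_le_mul_of_nonneg_left hrnsp hsqrt.le
    _ = ρ * ∑ i ∈ Sᶜ, w i * ‖v i‖ + γ * Real.sqrt k * l2norm (A v) := by
        rw [mul_add, mul_div_cancel₀ _ hsqrt.ne']
        ring

theorem add_le_of_le_mul_add_of_le_add {a b c d ρ : ℝ} (hρ0 : 0 ≤ ρ) (hρ1 : ρ < 1)
    (ha : a ≤ ρ * b + c) (hb : b ≤ d + a) :
    a + b ≤ (1 + ρ) / (1 - ρ) * d + 2 / (1 - ρ) * c := by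
  have h1ρ : 0 < 1 - ρ := by linarith
  have hb' : (1 - ρ) * b ≤ d + c := by linarith
  rw [div_mul_eq_mul_div, div_mul_eq_mul_div, ← add_div, le_div_iff₀ h1ρ]
  nlinarith [mul_le_mul_of_nonneg_left hb' (by linarith : 0 ≤ 1 + ρ)]

theorem wRNSP_l1_distance_bound_general {V : Type*} [NormedAddCommGroup V]
    [InnerProductSpace ℂ V] {N m : ℕ}
    (A : (Fin N → V) →L[ℂ] (Fin m → V)) (k : ℝ) (hk : 0 < k)
    (w : Fin N → ℝ) (hw : ∀ i, 0 < w i)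
    (ρ γ : ℝ) (hρ0 : 0 < ρ) (hρ1 : ρ < 1)
    (h : wRNSP A k w ρ γ) (x z : Fin N → V) :
    l1wnorm w (z - x) ≤
      (1 + ρ) / (1 - ρ) * (2 * sigmaK k w x + l1wnorm w z - l1wnorm w x) +
        2 * γ / (1 - ρ) * Real.sqrt k * l2norm (A (z - x)) := by
  obtain ⟨S, hS, hσ⟩ := exists_sigmaK_eq_sum_compl k hk.le w x
  have on_S := h.sum_mul_norm_le hk (z - x) S hS
  have cone := sum_compl_mul_norm_sub_le (fun i => (hw i).le) S x z
  have key := add_le_of_le_mul_add_of_le_add hρ0.le hρ1 on_S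
    (d := 2 * sigmaK k w x + l1wnorm w z - l1wnorm w x) (by simp only [Pi.sub_apply]; linarith)
  calc l1wnorm w (z - x) = _ := l1wnorm_eq_sum_add_sum_compl w (z - x) S
    _ ≤ _ := key
    _ = _ := by ring

/-- Weighted rNSP implies the `ℓ¹_w` distance bound. -/
theorem wRNSP_l1_distance_bound {V : Type*} [NormedAddCommGroup V]
    [InnerProductSpace ℂ V] [CompleteSpace V] {N m : ℕ}
    (A : (Fin N → V) →L[ℂ] (Fin m → V)) (k : ℝ) (hk : 0 < k)
    (w : Fin N → ℝ) (hw : ∀ i, 0 < w i)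
    (ρ γ : ℝ) (hρ0 : 0 < ρ) (hρ1 : ρ < 1) (hγ : 0 < γ)
    (h : wRNSP A k w ρ γ) (x z : Fin N → V) :
    l1wnorm w (z - x) ≤
      (1 + ρ) / (1 - ρ) * (2 * sigmaK k w x + l1wnorm w z - l1wnorm w x) +
        2 * γ / (1 - ρ) * Real.sqrt k * l2norm (A (z - x)) :=
  wRNSP_l1_distance_bound_general A k hk w hw ρ γ hρ0 hρ1 h x z
end

section
/- Let V be a separable Hilbert space, and suppose A ∈ B(V^N, V^m) has the weighted robust null space property over V of order (k,w) with constants 0 < ρ < 1 and γ > 0. Then for all x, z ∈ V^N, ‖z − x‖_{2;V} ≤ ((1+ρ)²/(1−ρ)) · (1/√k) · (2σ_k(x)_{1,w;V} + ‖z‖_{1,w;V} − ‖x‖_{1,w;V}) + ((3+ρ)γ/(1−ρ)) ‖A(z−x)‖_{2;V}. -/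
/-!
Put `v = z - x`. Choosing `S` as the indices where `‖v i‖ / w i` exceeds `‖v‖_{1,w} / k` makes
`|S|_w ≤ k` and `√k ‖v_{Sᶜ}‖₂ ≤ ‖v‖_{1,w}`, so the rNSP on `S` yields
`√k ‖v‖₂ ≤ (1 + ρ) ‖v‖_{1,w} + √k γ ‖A v‖₂`. On any admissible `S`, Cauchy–Schwarz turns the rNSP
into `‖v_S‖_{1,w} ≤ ρ ‖v_{Sᶜ}‖_{1,w} + √k γ ‖A v‖₂`, and together with the cone inequality
`‖v_{Sᶜ}‖_{1,w} ≤ ‖z‖_{1,w} - ‖x‖_{1,w} + 2 ‖x_{Sᶜ}‖_{1,w} + ‖v_S‖_{1,w}` this bounds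
`(1 - ρ) ‖v‖_{1,w}`. Combining the two estimates and minimising over `S` gives the claim.
-/

open Finset

section Norms

variable {ι V : Type*} [Fintype ι] [NormedAddCommGroup V]

theorem l2norm_eq_norm_toLp (x : ι → V) :
    l2norm x = ‖WithLp.toLp 2 x‖ :=
  (PiLp.norm_eq_of_L2 (WithLp.toLp 2 x)).symm

theorem l2norm_add_le (x y : ι → V) : l2norm (x + y) ≤ l2norm x + l2norm y := by
  simpa only [l2norm_eq_norm_toLp, WithLp.toLp_add] using norm_add_le _ _

theorem l1wnorm_nonneg {w : ι → ℝ} (hw : ∀ i, 0 ≤ w i) (x : ι → V) : 0 ≤ l1wnorm w x :=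
  sum_nonneg fun i _ => mul_nonneg (hw i) (norm_nonneg _)

variable [DecidableEq ι]

theorem l2norm_ite_mem (x : ι → V) (S : Finset ι) :
    l2norm (fun i => if i ∈ S then x i else 0) = √(∑ i ∈ S, ‖x i‖ ^ 2) := by
  simp [l2norm, apply_ite, sum_ite_mem]

theorem l1wnorm_ite_mem (w : ι → ℝ) (x : ι → V) (S : Finset ι) :
    l1wnorm w (fun i => if i ∈ S then x i else 0) = ∑ i ∈ S, w i * ‖x i‖ := by
  simp [l1wnorm, apply_ite, sum_ite_mem]

theorem l1wnorm_ite_add_ite (w : ι → ℝ) (x : ι → V) (S : Finset ι) :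
    l1wnorm w (fun i => if i ∈ S then x i else 0) + l1wnorm w (fun i => if i ∈ S then 0 else x i) =
      l1wnorm w x := by
  simp only [l1wnorm, ← sum_add_distrib]
  congr! 1 with i
  by_cases hi : i ∈ S <;> simp [hi]

theorem l1wnorm_ite_notMem_le {w : ι → ℝ} (hw : ∀ i, 0 ≤ w i) (x : ι → V) (S : Finset ι) :
    l1wnorm w (fun i => if i ∈ S then 0 else x i) ≤ l1wnorm w x := by
  rw [← l1wnorm_ite_add_ite w x S]
  exact le_add_of_nonneg_left (l1wnorm_nonneg hw _)

theorem l2norm_le_ite_add_ite (x : ι → V) (S : Finset ι) :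
    l2norm x ≤ l2norm (fun i => if i ∈ S then x i else 0) +
      l2norm (fun i => if i ∈ S then 0 else x i) := by
  convert l2norm_add_le _ _ using 2
  ext i
  by_cases hi : i ∈ S <;> simp [hi]

theorem l1wnorm_ite_notMem_sub_le {w : ι → ℝ} (hw : ∀ i, 0 ≤ w i) (x z : ι → V) (S : Finset ι) :
    l1wnorm w (fun i => if i ∈ S then 0 else (z - x) i) ≤
      l1wnorm w z - l1wnorm w x + 2 * l1wnorm w (fun i => if i ∈ S then 0 else x i) +
        l1wnorm w (fun i => if i ∈ S then (z - x) i else 0) := by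
  simp only [l1wnorm, mul_sum, ← sum_sub_distrib, ← sum_add_distrib]
  gcongr with i
  have hwi := hw i
  by_cases hi : i ∈ S <;> simp only [hi, if_true, if_false, Pi.sub_apply, norm_zero, mul_zero]
  · nlinarith [norm_sub_norm_le (x i) (z i), norm_sub_rev (x i) (z i)]
  · nlinarith [norm_sub_le (z i) (x i)]

theorem one_sub_mul_l1wnorm_sub_le {w : ι → ℝ} (hw : ∀ i, 0 ≤ w i) {ρ τ : ℝ} (hρ : |ρ| ≤ 1)
    {x z : ι → V} {S : Finset ι}
    (hS : l1wnorm w (fun i => if i ∈ S then (z - x) i else 0) ≤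
      ρ * l1wnorm w (fun i => if i ∈ S then 0 else (z - x) i) + τ) :
    (1 - ρ) * l1wnorm w (z - x) ≤
      (1 + ρ) * (2 * l1wnorm w (fun i => if i ∈ S then 0 else x i) + l1wnorm w z - l1wnorm w x) +
        2 * τ := by
  obtain ⟨hρ₀, hρ₁⟩ := abs_le.mp hρ
  have hcone := l1wnorm_ite_notMem_sub_le hw x z S
  rw [← l1wnorm_ite_add_ite w (z - x) S]
  nlinarith [mul_le_mul_of_nonneg_left hS (sub_nonneg.mpr hρ₁),
    mul_le_mul_of_nonneg_left (hcone.trans (add_le_add_right hS _)) (neg_le_iff_add_nonneg'.mp hρ₀)]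

theorem exists_sum_sq_le_and_sqrt_mul_l2norm_ite_notMem_le {w : ι → ℝ} (hw : ∀ i, 0 < w i) {k : ℝ}
    (hk : 0 < k) (v : ι → V) :
    ∃ S : Finset ι, ∑ i ∈ S, w i ^ 2 ≤ k ∧
      √k * l2norm (fun i => if i ∈ S then 0 else v i) ≤ l1wnorm w v := by
  set L := l1wnorm w v
  have hL : 0 ≤ L := l1wnorm_nonneg (fun i => (hw i).le) v
  obtain ⟨S, hS_def⟩ : ∃ S : Finset ι, S = univ.filter fun i => L * w i < k * ‖v i‖ := ⟨_, rfl⟩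
  have hmem (i : ι) : i ∈ S ↔ L * w i < k * ‖v i‖ := by simp [hS_def]
  refine ⟨S, ?_, ?_⟩
  · rcases S.eq_empty_or_nonempty with hS | hS
    · simpa [hS] using hk.le
    have hlt : L * ∑ i ∈ S, w i ^ 2 < k * L :=
      calc L * ∑ i ∈ S, w i ^ 2 = ∑ i ∈ S, L * w i * w i := by simp only [mul_sum, sq, mul_assoc]
        _ < ∑ i ∈ S, k * ‖v i‖ * w i :=
          sum_lt_sum_of_nonempty hS fun i hi => mul_lt_mul_of_pos_right ((hmem i).mp hi) (hw i)
        _ = k * ∑ i ∈ S, w i * ‖v i‖ := by simp only [mul_sum, mul_comm, mul_left_comm]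
        _ ≤ k * L := by
          gcongr; exact sum_le_univ_sum_of_nonneg fun i => mul_nonneg (hw i).le (norm_nonneg _)
    by_contra! hSk
    nlinarith
  · have hterm (i : ι) :
        k * ‖if i ∈ S then 0 else v i‖ ^ 2 ≤ L * (w i * ‖v i‖) := by
      split_ifs with hi
      · rw [norm_zero, zero_pow two_ne_zero, mul_zero]
        exact mul_nonneg hL (mul_nonneg (hw i).le (norm_nonneg _))
      · nlinarith [(hmem i).not.mp hi, norm_nonneg (v i)]
    rw [l2norm, ← Real.sqrt_mul hk.le, Real.sqrt_le_iff, mul_sum, sq]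
    exact ⟨hL, (sum_le_sum fun i _ => hterm i).trans_eq (mul_sum ..).symm⟩

theorem le_add_mul_sigmaK {k : ℝ} (hk : 0 ≤ k) {w : ι → ℝ} {x : ι → V} {r a c : ℝ} (hc : 0 < c)
    (h : ∀ S : Finset ι, ∑ i ∈ S, w i ^ 2 ≤ k →
      r ≤ a + c * l1wnorm w (fun i => if i ∈ S then 0 else x i)) :
    r ≤ a + c * sigmaK k w x := by
  have hσ : (r - a) / c ≤ sigmaK k w x :=
    le_csInf ⟨_, ∅, by simpa using hk, rfl⟩ fun _ ⟨S, hS, hr⟩ =>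
      hr ▸ (div_le_iff₀' hc).mpr (by linarith [h S hS])
  linarith [(div_le_iff₀' hc).mp hσ]

end Norms

namespace wRNSP

variable {N m : ℕ} {V : Type*} [NormedAddCommGroup V] [InnerProductSpace ℂ V]
  {A : (Fin N → V) →L[ℂ] (Fin m → V)} {k : ℝ} {w : Fin N → ℝ} {ρ γ : ℝ}

theorem sqrt_mul_l2norm_ite_mem_le (h : wRNSP A k w ρ γ) (hk : 0 < k) (v : Fin N → V)
    {S : Finset (Fin N)} (hS : ∑ i ∈ S, w i ^ 2 ≤ k) :
    √k * l2norm (fun i => if i ∈ S then v i else 0) ≤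
      ρ * l1wnorm w (fun i => if i ∈ S then 0 else v i) + √k * (γ * l2norm (A v)) := by
  have hk' : 0 < √k := Real.sqrt_pos.mpr hk
  calc √k * l2norm (fun i => if i ∈ S then v i else 0)
      ≤ √k * (ρ * l1wnorm w (fun i => if i ∈ S then 0 else v i) / √k + γ * l2norm (A v)) := by
        gcongr; exact h v S hS
    _ = _ := by field_simp

theorem l1wnorm_ite_mem_le (h : wRNSP A k w ρ γ) (hk : 0 < k) (v : Fin N → V)
    {S : Finset (Fin N)} (hS : ∑ i ∈ S, w i ^ 2 ≤ k) :
    l1wnorm w (fun i => if i ∈ S then v i else 0) ≤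
      ρ * l1wnorm w (fun i => if i ∈ S then 0 else v i) + √k * (γ * l2norm (A v)) :=
  calc l1wnorm w (fun i => if i ∈ S then v i else 0)
      ≤ √(∑ i ∈ S, w i ^ 2) * √(∑ i ∈ S, ‖v i‖ ^ 2) := by
        rw [l1wnorm_ite_mem]; exact Real.sum_mul_le_sqrt_mul_sqrt ..
    _ ≤ √k * l2norm (fun i => if i ∈ S then v i else 0) := by
        rw [l2norm_ite_mem]; gcongr
    _ ≤ _ := h.sqrt_mul_l2norm_ite_mem_le hk v hS

theorem sqrt_mul_l2norm_le (h : wRNSP A k w ρ γ) (hk : 0 < k) (hw : ∀ i, 0 < w i) (hρ : 0 ≤ ρ)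
    (v : Fin N → V) :
    √k * l2norm v ≤ (1 + ρ) * l1wnorm w v + √k * (γ * l2norm (A v)) := by
  obtain ⟨S, hS, htail⟩ := exists_sum_sq_le_and_sqrt_mul_l2norm_ite_notMem_le hw hk v
  have hhead := h.sqrt_mul_l2norm_ite_mem_le hk v hS
  have hcompl := mul_le_mul_of_nonneg_left (l1wnorm_ite_notMem_le (fun i => (hw i).le) v S) hρ
  calc √k * l2norm v
      ≤ √k * l2norm (fun i => if i ∈ S then v i else 0) +
          √k * l2norm (fun i => if i ∈ S then 0 else v i) := by
        rw [← mul_add]; gcongr; exact l2norm_le_ite_add_ite v S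
    _ ≤ _ := by linarith

theorem l2norm_sub_le (h : wRNSP A k w ρ γ) (hk : 0 < k) (hw : ∀ i, 0 < w i) (hρ₀ : 0 ≤ ρ)
    (hρ₁ : ρ < 1) (x z : Fin N → V) {S : Finset (Fin N)} (hS : ∑ i ∈ S, w i ^ 2 ≤ k) :
    l2norm (z - x) ≤
      (1 + ρ) ^ 2 / (1 - ρ) / √k *
          (2 * l1wnorm w (fun i => if i ∈ S then 0 else x i) + l1wnorm w z - l1wnorm w x) +
        (3 + ρ) * γ / (1 - ρ) * l2norm (A (z - x)) := by
  have hl2 := h.sqrt_mul_l2norm_le hk hw hρ₀ (z - x)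
  have hl1 := one_sub_mul_l1wnorm_sub_le (fun i => (hw i).le) (abs_le.mpr ⟨by linarith, hρ₁.le⟩)
    (h.l1wnorm_ite_mem_le hk (z - x) hS)
  have hk' : 0 < √k := Real.sqrt_pos.mpr hk
  have hρ' : 0 < 1 - ρ := sub_pos.mpr hρ₁
  set D := 2 * l1wnorm w (fun i => if i ∈ S then 0 else x i) + l1wnorm w z - l1wnorm w x
  set E := l2norm (A (z - x))
  have key : √k * (1 - ρ) * l2norm (z - x) ≤ (1 + ρ) ^ 2 * D + (3 + ρ) * γ * E * √k := by
    nlinarith [mul_le_mul_of_nonneg_left hl2 hρ'.le,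
      mul_le_mul_of_nonneg_left hl1 (by linarith : 0 ≤ 1 + ρ)]
  calc l2norm (z - x) = √k * (1 - ρ) * l2norm (z - x) / (√k * (1 - ρ)) := by field_simp
    _ ≤ ((1 + ρ) ^ 2 * D + (3 + ρ) * γ * E * √k) / (√k * (1 - ρ)) := by gcongr
    _ = _ := by field_simp

end wRNSP

theorem wRNSP_l2_distance_bound_general {V : Type*} [NormedAddCommGroup V]
    [InnerProductSpace ℂ V] {N m : ℕ}
    (A : (Fin N → V) →L[ℂ] (Fin m → V)) (k : ℝ) (hk : 0 < k)
    (w : Fin N → ℝ) (hw : ∀ i, 0 < w i)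
    (ρ γ : ℝ) (hρ0 : 0 < ρ) (hρ1 : ρ < 1)
    (h : wRNSP A k w ρ γ) (x z : Fin N → V) :
    l2norm (z - x) ≤
      (1 + ρ) ^ 2 / (1 - ρ) / Real.sqrt k *
          (2 * sigmaK k w x + l1wnorm w z - l1wnorm w x) +
        (3 + ρ) * γ / (1 - ρ) * l2norm (A (z - x)) := by
  set C := (1 + ρ) ^ 2 / (1 - ρ) / √k
  have hC : 0 < 2 * C :=
    mul_pos two_pos (div_pos (div_pos (by positivity) (sub_pos.mpr hρ1)) (Real.sqrt_pos.mpr hk))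
  refine (le_add_mul_sigmaK (a := C * (l1wnorm w z - l1wnorm w x) +
    (3 + ρ) * γ / (1 - ρ) * l2norm (A (z - x))) hk.le hC fun S hS => ?_).trans_eq (by ring)
  exact (h.l2norm_sub_le hk hw hρ0.le hρ1 x z hS).trans_eq (by ring)

/-- Weighted rNSP implies the `ℓ²` distance bound. -/
theorem wRNSP_l2_distance_bound {V : Type*} [NormedAddCommGroup V]
    [InnerProductSpace ℂ V] [CompleteSpace V] {N m : ℕ}
    (A : (Fin N → V) →L[ℂ] (Fin m → V)) (k : ℝ) (hk : 0 < k)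
    (w : Fin N → ℝ) (hw : ∀ i, 0 < w i)
    (ρ γ : ℝ) (hρ0 : 0 < ρ) (hρ1 : ρ < 1) (hγ : 0 < γ)
    (h : wRNSP A k w ρ γ) (x z : Fin N → V) :
    l2norm (z - x) ≤
      (1 + ρ) ^ 2 / (1 - ρ) / Real.sqrt k *
          (2 * sigmaK k w x + l1wnorm w z - l1wnorm w x) +
        (3 + ρ) * γ / (1 - ρ) * l2norm (A (z - x)) :=
  wRNSP_l2_distance_bound_general A k hk w hw ρ γ hρ0 hρ1 h x z
end

section
/- For n, d ∈ ℕ, let Λ_{n,d}^{HC} = { ν ∈ ℕ₀^d : ∏_{k=1}^d (ν_k + 1) ≤ n } be the hyperbolic cross index set of order n. Then its cardinality satisfies |Λ_{n,d}^{HC}| ≤ 2 n³ 4^d. -/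
/-! Rankin's trick: each `ν` in the hyperbolic cross of order `n` has weight
`n² ∏ₖ (νₖ + 1)⁻² ≥ 1`, so its cardinality is at most the total weight of the box `{0, …, n-1}ᵈ`,
which factors as `n² (∑_{j=1}^n j⁻²)ᵈ ≤ n² 2ᵈ`. -/

open Finset

def hyperbolicCross (ι : Type*) [Fintype ι] [DecidableEq ι] (n : ℕ) : Finset (ι → ℕ) :=
  (Fintype.piFinset fun _ => range n).filter fun ν => ∏ i, (ν i + 1) ≤ n

variable {ι : Type*} [Fintype ι] [DecidableEq ι]

theorem coe_hyperbolicCross (n : ℕ) :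
    (hyperbolicCross ι n : Set (ι → ℕ)) = {ν | ∏ i, (ν i + 1) ≤ n} := by
  ext ν
  simp only [hyperbolicCross, coe_filter, Fintype.mem_piFinset, mem_range, Set.mem_ofPred_eq,
    and_iff_right_iff_imp]
  intro h i
  have : ν i + 1 ≤ ∏ j, (ν j + 1) := single_le_prod' (fun j _ => Nat.le_add_left 1 _) (mem_univ i)
  omega

theorem sum_range_inv_succ_sq_le_two (n : ℕ) : ∑ j ∈ range n, (((j + 1 : ℕ) : ℝ) ^ 2)⁻¹ ≤ 2 := by
  calc ∑ j ∈ range n, (((j + 1 : ℕ) : ℝ) ^ 2)⁻¹ = ∑ i ∈ Ioo 0 (n + 1), ((i : ℝ) ^ 2)⁻¹ := by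
        rw [range_eq_Ico, sum_Ico_add' (fun i : ℕ => ((i : ℝ) ^ 2)⁻¹), zero_add,
          ← Ico_add_one_left_eq_Ioo, zero_add]
    _ ≤ 2 / ((0 : ℕ) + 1) := sum_Ioo_inv_sq_le 0 (n + 1)
    _ = 2 := by norm_num

theorem card_hyperbolicCross_le (n : ℕ) :
    #(hyperbolicCross ι n) ≤ n ^ 2 * 2 ^ Fintype.card ι := by
  let w : (ι → ℕ) → ℝ := fun ν => ∏ i, (((ν i + 1 : ℕ) : ℝ) ^ 2)⁻¹
  have one_le_weight : ∀ ν ∈ hyperbolicCross ι n, (1 : ℝ) ≤ n ^ 2 * w ν := by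
    intro ν hν
    have hprod : ((∏ i, (ν i + 1) : ℕ) : ℝ) ≤ n := by exact_mod_cast (mem_filter.mp hν).2
    simp only [w, prod_inv_distrib, prod_pow]
    push_cast at hprod ⊢
    rw [← div_eq_mul_inv, one_le_div (by positivity)]
    gcongr
  have : (#(hyperbolicCross ι n) : ℝ) ≤ n ^ 2 * 2 ^ Fintype.card ι :=
    calc (#(hyperbolicCross ι n) : ℝ) = ∑ ν ∈ hyperbolicCross ι n, 1 := by simp
      _ ≤ ∑ ν ∈ hyperbolicCross ι n, n ^ 2 * w ν := sum_le_sum one_le_weight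
      _ ≤ ∑ ν ∈ Fintype.piFinset fun _ => range n, n ^ 2 * w ν :=
          sum_le_sum_of_subset_of_nonneg (filter_subset _ _) fun _ _ _ => by positivity
      _ = n ^ 2 * ∏ _i : ι, ∑ j ∈ range n, (((j + 1 : ℕ) : ℝ) ^ 2)⁻¹ := by
          rw [← mul_sum, prod_univ_sum]
      _ ≤ n ^ 2 * 2 ^ Fintype.card ι := by
          gcongr
          exact (prod_le_prod (fun _ _ => sum_nonneg fun _ _ => by positivity)
            fun _ _ => sum_range_inv_succ_sq_le_two n).trans_eq (by simp)
  exact_mod_cast this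

theorem hyperbolic_cross_card_le_general (d n : ℕ) :
    {ν : Fin d → ℕ | ∏ k, (ν k + 1) ≤ n}.Finite ∧
      {ν : Fin d → ℕ | ∏ k, (ν k + 1) ≤ n}.ncard ≤ 2 * n ^ 3 * 4 ^ d := by
  rw [← coe_hyperbolicCross, Set.ncard_coe_finset]
  refine ⟨finite_toSet _, (card_hyperbolicCross_le n).trans ?_⟩
  rw [Fintype.card_fin]
  gcongr
  · rcases n.eq_zero_or_pos with rfl | hn
    · simp
    · nlinarith [Nat.pow_le_pow_right hn (show 2 ≤ 3 by norm_num)]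
  · norm_num

/-- Cardinality bound for the hyperbolic cross index set:
`|Λ^HC_{n,d}| ≤ 2 n³ 4^d`. -/
theorem hyperbolic_cross_card_le (d n : ℕ) (hd : 1 ≤ d) (hn : 1 ≤ n) :
    {ν : Fin d → ℕ | ∏ k, (ν k + 1) ≤ n}.Finite ∧
      {ν : Fin d → ℕ | ∏ k, (ν k + 1) ≤ n}.ncard ≤ 2 * n ^ 3 * 4 ^ d :=
  hyperbolic_cross_card_le_general d n
end

section
/- Let d ∈ ℕ and define the Chebyshev intrinsic weights u_ν = 2^{‖ν‖₀/2} for ν ∈ ℕ₀^d, where ‖ν‖₀ = |{k : ν_k ≠ 0}|. For s ∈ ℕ, let k(s) = max{ |S|_u : S ⊂ ℕ₀^d lower, |S| ≤ s }, where |S|_u = ∑_{ν∈S} u_ν². Then k(s) ≤ min{ 2^d s, s^{log 3 / log 2} }. -/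
/-!
For `p ≥ 1` and a lower set `S ⊆ ℕ^d` we show `∑_{ν ∈ S} (2^p - 1)^{‖ν‖₀} ≤ |S|^p`; at
`p = log 3 / log 2` the weight is `2^{‖ν‖₀}`. Induct on `d`, cutting `S` into the slices
`S_j = {μ | (j, μ) ∈ S}`: they are lower sets that shrink as `j` grows, and `(j, μ)` has one more
nonzero coordinate than `μ` when `j ≠ 0`. It then suffices that
`a^p + (2^p - 1) ∑ bᵢ^p ≤ (a + ∑ bᵢ)^p` for `0 ≤ bᵢ ≤ a`, which reduces to the two-term case
`x^p + (2^p - 1) y^p ≤ (x + y)^p` for `0 ≤ y ≤ x`. With `l = 2y/(x + y)`, `x` is the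
`(1 - l, l)`-combination of `x + y` and `(x + y)/2`, and `y` that of `0` and `(x + y)/2`, so this
is convexity of `t ↦ t^p`.
-/

open Finset

namespace Real

variable {p : ℝ}

theorem rpow_add_mul_rpow_le_add_rpow (hp : 1 ≤ p) {x y : ℝ} (hy : 0 ≤ y) (hyx : y ≤ x) :
    x ^ p + (2 ^ p - 1) * y ^ p ≤ (x + y) ^ p := by
  rcases (add_nonneg (hy.trans hyx) hy).eq_or_lt with hT | hT
  · obtain ⟨rfl, rfl⟩ : x = 0 ∧ y = 0 := ⟨by linarith, by linarith⟩
    simp [zero_rpow (by positivity : p ≠ 0)]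
  set l := 2 * y / (x + y)
  have hlT : l * (x + y) = 2 * y := div_mul_cancel₀ _ hT.ne'
  have hl0 : 0 ≤ l := by positivity
  have hl1 : 0 ≤ 1 - l := by rw [sub_nonneg, div_le_one hT]; linarith
  have hp0 : p ≠ 0 := by positivity
  have hconv := convexOn_rpow hp
  have hx : x ^ p ≤ (1 - l) * (x + y) ^ p + l * ((x + y) / 2) ^ p := by
    have key := hconv.2 (x := x + y) (y := (x + y) / 2) hT.le (Set.mem_Ici.2 (by positivity))
      hl1 hl0 (by ring)
    simp only [smul_eq_mul] at key
    rwa [show (1 - l) * (x + y) + l * ((x + y) / 2) = x by linear_combination (-1 / 2) * hlT]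
      at key
  have hy' : y ^ p ≤ l * ((x + y) / 2) ^ p := by
    have key := hconv.2 (x := (x + y) / 2) (y := 0) (Set.mem_Ici.2 (by positivity))
      Set.self_mem_Ici hl0 hl1 (by ring)
    simp only [smul_eq_mul] at key
    rwa [show l * ((x + y) / 2) + (1 - l) * 0 = y by linear_combination (1 / 2) * hlT,
      zero_rpow hp0, mul_zero, add_zero] at key
  have hhalf : l * (2 ^ p * ((x + y) / 2) ^ p) = l * (x + y) ^ p := by
    rw [← mul_rpow (by norm_num) (by positivity), mul_div_cancel₀ _ two_ne_zero]
  have h2p : 0 ≤ (2 : ℝ) ^ p - 1 := sub_nonneg.2 (one_le_rpow (by norm_num) (by linarith))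
  linarith [mul_le_mul_of_nonneg_left hy' h2p]

theorem rpow_add_mul_sum_rpow_le_add_sum_rpow {ι : Type*} (hp : 1 ≤ p) (s : Finset ι)
    {a : ℝ} {b : ι → ℝ} (hb : ∀ i ∈ s, 0 ≤ b i) (hba : ∀ i ∈ s, b i ≤ a) :
    a ^ p + (2 ^ p - 1) * ∑ i ∈ s, b i ^ p ≤ (a + ∑ i ∈ s, b i) ^ p := by
  classical
  induction s using Finset.induction_on with
  | empty => simp
  | insert i s hi ih =>
    rw [sum_insert hi, sum_insert hi]
    have hs := ih (fun j hj ↦ hb j (mem_insert_of_mem hj)) fun j hj ↦ hba j (mem_insert_of_mem hj)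
    have hbi : b i ≤ a + ∑ j ∈ s, b j :=
      le_add_of_le_of_nonneg (hba i (mem_insert_self i s))
        (sum_nonneg fun j hj ↦ hb j (mem_insert_of_mem hj))
    calc a ^ p + (2 ^ p - 1) * (b i ^ p + ∑ j ∈ s, b j ^ p)
        = (a ^ p + (2 ^ p - 1) * ∑ j ∈ s, b j ^ p) + (2 ^ p - 1) * b i ^ p := by ring
      _ ≤ (a + ∑ j ∈ s, b j) ^ p + (2 ^ p - 1) * b i ^ p := by gcongr
      _ ≤ (a + ∑ j ∈ s, b j + b i) ^ p :=
          rpow_add_mul_rpow_le_add_rpow hp (hb i (mem_insert_self i s)) hbi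
      _ = (a + (b i + ∑ j ∈ s, b j)) ^ p := by ring_nf

end Real

section Slices

variable {α : Type*} {d : ℕ}

noncomputable def tailSlice (S : Finset (Fin (d + 1) → α)) (j : α) : Finset (Fin d → α) :=
  S.preimage (Fin.cons (α := fun _ ↦ α) j) (Fin.cons_right_injective _).injOn

@[simp]
theorem mem_tailSlice {S : Finset (Fin (d + 1) → α)} {j : α} {μ : Fin d → α} :
    μ ∈ tailSlice S j ↔ Fin.cons j μ ∈ S :=
  mem_preimage

variable [Preorder α] {S : Finset (Fin (d + 1) → α)}

theorem isLowerSet_tailSlice (hS : IsLowerSet (S : Set (Fin (d + 1) → α))) (j : α) :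
    IsLowerSet (tailSlice S j : Set (Fin d → α)) := fun _ _ hle hμ ↦
  mem_tailSlice.2 <| hS (Fin.cons_le_cons.2 ⟨le_rfl, hle⟩) (mem_tailSlice.1 hμ)

theorem antitone_tailSlice (hS : IsLowerSet (S : Set (Fin (d + 1) → α))) :
    Antitone (tailSlice S) := fun _ _ hij _ hμ ↦
  mem_tailSlice.2 <| hS (Fin.cons_le_cons.2 ⟨hij, le_rfl⟩) (mem_tailSlice.1 hμ)

end Slices

theorem sum_eq_sum_range_sum_tailSlice {M : Type*} [AddCommMonoid M] {d : ℕ}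
    (S : Finset (Fin (d + 1) → ℕ)) (f : (Fin (d + 1) → ℕ) → M) :
    ∑ ν ∈ S, f ν = ∑ j ∈ range (S.sup (· 0) + 1), ∑ μ ∈ tailSlice S j, f (Fin.cons j μ) := by
  rw [← sum_fiberwise_of_maps_to (g := (· 0))
    fun ν hν ↦ mem_range.2 (Nat.lt_succ_of_le (le_sup (f := (· 0)) hν))]
  refine sum_congr rfl fun j _ ↦ ?_
  refine sum_nbij' Fin.tail (Fin.cons (α := fun _ ↦ ℕ) j) ?_ ?_ ?_ ?_ ?_
  · intro ν hν
    obtain ⟨hνS, rfl⟩ := mem_filter.1 hν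
    rwa [mem_tailSlice, Fin.cons_self_tail]
  · intro μ hμ
    exact mem_filter.2 ⟨mem_tailSlice.1 hμ, Fin.cons_zero _ _⟩
  · intro ν hν
    obtain ⟨-, rfl⟩ := mem_filter.1 hν
    exact Fin.cons_self_tail ν
  · intro μ _
    exact Fin.tail_cons _ _
  · intro ν hν
    obtain ⟨-, rfl⟩ := mem_filter.1 hν
    rw [Fin.cons_self_tail]

def supportCard {d : ℕ} (ν : Fin d → ℕ) : ℕ :=
  (univ.filter fun k ↦ ν k ≠ 0).card

theorem supportCard_cons_zero {d : ℕ} (μ : Fin d → ℕ) :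
    supportCard (Fin.cons 0 μ : Fin (d + 1) → ℕ) = supportCard μ := by
  simp [supportCard, card_filter, Fin.sum_univ_succ]

theorem supportCard_cons_of_ne_zero {d : ℕ} {j : ℕ} (hj : j ≠ 0) (μ : Fin d → ℕ) :
    supportCard (Fin.cons j μ : Fin (d + 1) → ℕ) = supportCard μ + 1 := by
  simp [supportCard, card_filter, Fin.sum_univ_succ, hj, add_comm]

theorem sum_pow_supportCard_le {d : ℕ} {c : ℝ} (hc : 1 ≤ c) (S : Finset (Fin d → ℕ)) :
    ∑ ν ∈ S, c ^ supportCard ν ≤ c ^ d * #S := by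
  calc ∑ ν ∈ S, c ^ supportCard ν ≤ ∑ _ν ∈ S, c ^ d := by
        gcongr with ν
        exact (card_filter_le _ _).trans_eq (card_fin d)
    _ = c ^ d * #S := by rw [sum_const, nsmul_eq_mul, mul_comm]

theorem sum_rpow_supportCard_le {p : ℝ} (hp : 1 ≤ p) {d : ℕ} (S : Finset (Fin d → ℕ))
    (hS : IsLowerSet (S : Set (Fin d → ℕ))) :
    ∑ ν ∈ S, (2 ^ p - 1) ^ supportCard ν ≤ (#S : ℝ) ^ p := by
  induction d with
  | zero =>
    simp only [supportCard, univ_eq_empty, filter_empty, card_empty, pow_zero, sum_const,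
      nsmul_eq_mul, mul_one]
    rcases (#S).eq_zero_or_pos with h | h
    · simp [h, Real.zero_rpow (by positivity : p ≠ 0)]
    · exact Real.self_le_rpow_of_one_le (by exact_mod_cast h) hp
  | succ d ih =>
    set J := range (S.sup (· 0) + 1)
    set c : ℕ → ℝ := fun j ↦ #(tailSlice S j)
    have h0 : 0 ∈ J := mem_range.2 (Nat.succ_pos _)
    have h2p : 0 ≤ (2 : ℝ) ^ p - 1 := sub_nonneg.2 (Real.one_le_rpow (by norm_num) (by linarith))
    have hcard : (#S : ℝ) = c 0 + ∑ j ∈ J.erase 0, c j := by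
      rw [add_sum_erase _ _ h0, card_eq_sum_ones, sum_eq_sum_range_sum_tailSlice]
      simp [c, J]
    calc ∑ ν ∈ S, (2 ^ p - 1) ^ supportCard ν
        = ∑ μ ∈ tailSlice S 0, (2 ^ p - 1) ^ supportCard μ
          + (2 ^ p - 1) * ∑ j ∈ J.erase 0, ∑ μ ∈ tailSlice S j, (2 ^ p - 1) ^ supportCard μ := by
          rw [sum_eq_sum_range_sum_tailSlice, ← add_sum_erase _ _ h0, mul_sum]
          congr 1
          · simp only [supportCard_cons_zero]
          · refine sum_congr rfl fun j hj ↦ ?_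
            simp only [supportCard_cons_of_ne_zero (ne_of_mem_erase hj), pow_succ', mul_sum]
      _ ≤ c 0 ^ p + (2 ^ p - 1) * ∑ j ∈ J.erase 0, c j ^ p := by
          gcongr with j
          all_goals exact ih _ (isLowerSet_tailSlice hS _)
      _ ≤ (c 0 + ∑ j ∈ J.erase 0, c j) ^ p :=
          Real.rpow_add_mul_sum_rpow_le_add_sum_rpow hp _ (fun _ _ ↦ by positivity)
            fun j _ ↦ Nat.cast_le.2 (card_le_card (antitone_tailSlice hS (Nat.zero_le j)))
      _ = (#S : ℝ) ^ p := by rw [hcard]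

theorem chebyshev_weighted_card_bound_general (d s : ℕ)
    (S : Finset (Fin d → ℕ))
    (hlower : ∀ ν ∈ S, ∀ μ : Fin d → ℕ, μ ≤ ν → μ ∈ S)
    (hcard : S.card ≤ s) :
    (∑ ν ∈ S, (2 : ℝ) ^ (Finset.univ.filter (fun k => ν k ≠ 0)).card) ≤
      min ((2 : ℝ) ^ d * s) ((s : ℝ) ^ (Real.log 3 / Real.log 2)) := by
  have hS : IsLowerSet (S : Set (Fin d → ℕ)) := fun ν μ hμν hν ↦ hlower ν hν μ hμν
  have hβ : 1 ≤ Real.logb 2 3 := by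
    rw [Real.le_logb_iff_rpow_le one_lt_two three_pos, Real.rpow_one]
    norm_num
  have h2β : (2 : ℝ) ^ Real.logb 2 3 - 1 = 2 := by
    rw [Real.rpow_logb two_pos (by norm_num) three_pos]
    norm_num
  refine le_min ?_ ?_
  · calc _ ≤ (2 : ℝ) ^ d * #S := sum_pow_supportCard_le one_le_two S
      _ ≤ _ := by gcongr
  · calc _ = ∑ ν ∈ S, ((2 : ℝ) ^ Real.logb 2 3 - 1) ^ supportCard ν := by rw [h2β]; rfl
      _ ≤ (#S : ℝ) ^ Real.logb 2 3 := sum_rpow_supportCard_le hβ S hS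
      _ ≤ (s : ℝ) ^ Real.logb 2 3 := by gcongr

/-- Chebyshev weighted cardinality bound: for any lower set `S` of multi-indices
with `|S| ≤ s`, the weighted cardinality `∑_{ν∈S} 2^{‖ν‖₀}` (Chebyshev intrinsic
weights `u_ν = 2^{‖ν‖₀/2}`) is at most `min{2^d s, s^{log 3 / log 2}}`. -/
theorem chebyshev_weighted_card_bound (d s : ℕ) (hd : 1 ≤ d) (hs : 1 ≤ s)
    (S : Finset (Fin d → ℕ))
    (hlower : ∀ ν ∈ S, ∀ μ : Fin d → ℕ, μ ≤ ν → μ ∈ S)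
    (hcard : S.card ≤ s) :
    (∑ ν ∈ S, (2 : ℝ) ^ (Finset.univ.filter (fun k => ν k ≠ 0)).card) ≤
      min ((2 : ℝ) ^ d * s) ((s : ℝ) ^ (Real.log 3 / Real.log 2)) :=
  chebyshev_weighted_card_bound_general d s S hlower hcard
end

section
/- Let d ∈ ℕ and define the Legendre intrinsic weights u_ν = ∏_{j=1}^d √(2ν_j + 1) for ν ∈ ℕ₀^d. For s ∈ ℕ, the maximum weighted cardinality over lower sets of size at most s satisfies k(s) := max{ ∑_{ν∈S} u_ν² : S ⊂ ℕ₀^d lower, |S| ≤ s } = s². -/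
open Finset

lemma sum_odds (n : ℕ) : ∑ k ∈ range n, (2 * k + 1) = n ^ 2 := by
  induction n with
  | zero => simp
  | succ n ih => rw [sum_range_succ, ih]; ring

lemma arith_lemma (n : ℕ → ℕ) (hmono : ∀ i j, i ≤ j → n j ≤ n i) (K : ℕ) :
    ∑ k ∈ range K, (2 * k + 1) * n k ^ 2 ≤ (∑ k ∈ range K, n k) ^ 2 := by
  induction K with
  | zero => simp
  | succ K ih =>
    rw [sum_range_succ, sum_range_succ]
    have hS : K * n K ≤ ∑ k ∈ range K, n k := by
      calc K * n K = ∑ _k ∈ range K, n K := by simp [mul_comm]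
        _ ≤ ∑ k ∈ range K, n k :=
            sum_le_sum fun i hi => hmono i K (le_of_lt (mem_range.mp hi))
    nlinarith [ih]

lemma lower_key : ∀ (d : ℕ) (Λ : Finset (Fin d → ℕ)),
    (∀ ν ∈ Λ, ∀ μ, μ ≤ ν → μ ∈ Λ) →
    (∑ ν ∈ Λ, ∏ j, (2 * ν j + 1)) ≤ Λ.card ^ 2 := by
  intro d
  induction d with
  | zero =>
    intro Λ _
    have h1 : ∀ ν ∈ Λ, ∏ j : Fin 0, (2 * ν j + 1) = 1 := by intro ν _; simp
    rw [Finset.sum_congr rfl h1, Finset.sum_const, smul_eq_mul, mul_one]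
    exact Nat.le_self_pow two_ne_zero _
  | succ d ih =>
    intro Λ hL
    set K := Λ.card with hK
    let snoc' : (Fin d → ℕ) → ℕ → (Fin (d + 1) → ℕ) := fun μ k => Fin.snoc μ k
    let init' : (Fin (d + 1) → ℕ) → (Fin d → ℕ) := fun ν => Fin.init ν
    have hlast : ∀ ν ∈ Λ, ν (Fin.last d) < K := by
      intro ν hν
      have hsub : (Finset.range (ν (Fin.last d) + 1)).image
          (fun t => snoc' 0 t) ⊆ Λ := by
        intro x hx
        simp only [mem_image, mem_range] at hx
        obtain ⟨t, ht, rfl⟩ := hx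
        apply hL ν hν
        intro i
        refine Fin.lastCases ?_ ?_ i
        · simpa [snoc'] using Nat.lt_succ_iff.mp ht
        · intro j; simp [snoc']
      have hinj : Function.Injective (fun t => snoc' 0 t) := by
        intro a b hab
        have := congrFun hab (Fin.last d)
        simpa [snoc'] using this
      have hcard := Finset.card_le_card hsub
      rw [Finset.card_image_of_injective _ hinj, Finset.card_range] at hcard
      omega
    set slice : ℕ → Finset (Fin d → ℕ) :=
      fun k => (Λ.filter (fun ν => ν (Fin.last d) = k)).image init' with hslice
    have hinjOn : ∀ k, Set.InjOn init'
        (Λ.filter (fun ν => ν (Fin.last d) = k)) := by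
      intro k ν hν ν' hν' h
      simp only [coe_filter, Set.mem_setOf_eq, mem_coe, mem_filter] at hν hν'
      calc ν = Fin.snoc (init' ν) (ν (Fin.last d)) := (Fin.snoc_init_self ν).symm
        _ = Fin.snoc (init' ν') (ν' (Fin.last d)) := by rw [h, hν.2, hν'.2]
        _ = ν' := Fin.snoc_init_self ν'
    have hmem : ∀ k (μ : Fin d → ℕ), μ ∈ slice k ↔ snoc' μ k ∈ Λ := by
      intro k μ
      constructor
      · intro h
        simp only [hslice, mem_image, mem_filter] at h
        obtain ⟨ν, ⟨hν, hk⟩, rfl⟩ := h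
        show Fin.snoc (Fin.init ν) k ∈ Λ
        rwa [← hk, Fin.snoc_init_self]
      · intro h
        simp only [hslice, mem_image, mem_filter]
        exact ⟨snoc' μ k, ⟨h, by simp [snoc']⟩, by simp [snoc', init']⟩
    have hslower : ∀ k, ∀ μ ∈ slice k, ∀ μ', μ' ≤ μ → μ' ∈ slice k := by
      intro k μ hμ μ' hle
      rw [hmem] at hμ ⊢
      apply hL _ hμ
      intro i
      refine Fin.lastCases ?_ ?_ i
      · simp [snoc']
      · intro j; simpa [snoc'] using hle j
    have hanti : ∀ k, slice (k + 1) ⊆ slice k := by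
      intro k μ hμ
      rw [hmem] at hμ ⊢
      apply hL _ hμ
      intro i
      refine Fin.lastCases ?_ ?_ i
      · simp [snoc']
      · intro j; simp [snoc']
    have hmono : ∀ i j, i ≤ j → (slice j).card ≤ (slice i).card := by
      intro i j hij
      have hA : Antitone slice := antitone_nat_of_succ_le hanti
      exact Finset.card_le_card (hA hij)
    have hmaps : ∀ ν ∈ Λ, ν (Fin.last d) ∈ range K :=
      fun ν hν => mem_range.mpr (hlast ν hν)
    have hsum := Finset.sum_fiberwise_of_maps_to hmaps
      (fun ν => ∏ j, (2 * ν j + 1))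
    have hinner : ∀ k, (∑ ν ∈ Λ.filter (fun ν => ν (Fin.last d) = k),
        ∏ j, (2 * ν j + 1)) = (2 * k + 1) * ∑ μ ∈ slice k, ∏ j, (2 * μ j + 1) := by
      intro k
      rw [hslice]
      rw [Finset.sum_image (fun x hx y hy h => hinjOn k hx hy h)]
      rw [Finset.mul_sum]
      apply Finset.sum_congr rfl
      intro ν hν
      have hk : ν (Fin.last d) = k := (mem_filter.mp hν).2
      rw [Fin.prod_univ_castSucc, hk, mul_comm]
      rfl
    have hcardsum : Λ.card = ∑ k ∈ range K, (slice k).card := by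
      rw [Finset.card_eq_sum_card_fiberwise hmaps]
      apply Finset.sum_congr rfl
      intro k _
      rw [hslice]
      exact (Finset.card_image_of_injOn (hinjOn k)).symm
    calc (∑ ν ∈ Λ, ∏ j, (2 * ν j + 1))
        = ∑ k ∈ range K, ∑ ν ∈ Λ.filter (fun ν => ν (Fin.last d) = k),
            ∏ j, (2 * ν j + 1) := hsum.symm
      _ = ∑ k ∈ range K, (2 * k + 1) * ∑ μ ∈ slice k, ∏ j, (2 * μ j + 1) := by
          exact Finset.sum_congr rfl fun k _ => hinner k
      _ ≤ ∑ k ∈ range K, (2 * k + 1) * (slice k).card ^ 2 := by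
          apply Finset.sum_le_sum
          intro k _
          exact Nat.mul_le_mul_left _ (ih (slice k) (hslower k))
      _ ≤ (∑ k ∈ range K, (slice k).card) ^ 2 :=
          arith_lemma (fun k => (slice k).card) hmono K
      _ = Λ.card ^ 2 := by rw [hcardsum]

/-- Legendre weighted cardinality over lower sets: the maximum of
`∑_{ν∈S} ∏_j (2ν_j + 1)` (Legendre intrinsic weights `u_ν² = ∏_j (2ν_j+1)`)
over lower sets `S` of cardinality at most `s` equals `s²`: every such set
satisfies the bound `≤ s²` and some such set attains it. -/
theorem legendre_weighted_card_max (d s : ℕ) (hd : 1 ≤ d) (hs : 1 ≤ s) :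
    (∀ S : Finset (Fin d → ℕ),
        (∀ ν ∈ S, ∀ μ : Fin d → ℕ, μ ≤ ν → μ ∈ S) → S.card ≤ s →
        (∑ ν ∈ S, ∏ j, (2 * ν j + 1)) ≤ s ^ 2) ∧
    (∃ S : Finset (Fin d → ℕ),
        (∀ ν ∈ S, ∀ μ : Fin d → ℕ, μ ≤ ν → μ ∈ S) ∧ S.card ≤ s ∧
        (∑ ν ∈ S, ∏ j, (2 * ν j + 1)) = s ^ 2) := by
  haveI : NeZero d := ⟨by omega⟩
  constructor
  · intro S hlow hcard
    exact le_trans (lower_key d S hlow) (Nat.pow_le_pow_left hcard 2)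
  · set g : ℕ → (Fin d → ℕ) := fun k j => if j = 0 then k else 0 with hg
    have hginj : Function.Injective g := by
      intro a b hab
      have := congrFun hab 0
      simpa [hg] using this
    refine ⟨(range s).image g, ?_, ?_, ?_⟩
    · intro ν hν μ hle
      simp only [mem_image, mem_range] at hν ⊢
      obtain ⟨k, hk, rfl⟩ := hν
      refine ⟨μ 0, ?_, ?_⟩
      · have h0 : μ 0 ≤ k := le_trans (hle 0) (le_of_eq (if_pos rfl))
        omega
      · funext j
        by_cases hj : j = 0
        · simp [hg, hj]
        · have := hle j
          simp only [hg, hj, if_false] at this ⊢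
          omega
    · exact le_trans (Finset.card_image_le) (by simp)
    · rw [Finset.sum_image (fun x _ y _ h => hginj h)]
      have : ∀ k ∈ range s, (∏ j, (2 * g k j + 1)) = 2 * k + 1 := by
        intro k _
        rw [Finset.prod_eq_single (0 : Fin d)]
        · simp [hg]
        · intro b _ hb; simp [hg, hb]
        · intro h; exact absurd (mem_univ _) h
      rw [Finset.sum_congr rfl this, sum_odds]
end

section
/- (Weighted Stechkin inequality.) Let Λ be a countable index set, w = (w_ν)_{ν∈Λ} positive weights, V a Hilbert space, 0 < p < q ≤ 2, and c = (c_ν) ∈ ℓ^p_w(Λ;V), i.e., ‖c‖_{p,w;V} = (∑_ν w_ν^{2−p} ‖c_ν‖_V^p)^{1/p} < ∞. Then for every k > 0 satisfying k ≥ ‖w‖²_∞ := sup_ν w_ν² (so that a nonempty admissible set exists) we have σ_k(c)_{q,w;V} ≤ ‖c‖_{p,w;V} · k^{1/q − 1/p}, where σ_k(c)_{q,w;V} = inf{ ‖c − c_S‖_{q,w;V} : S ⊆ Λ, ∑_{ν∈S} w_ν² ≤ k }. -/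
open scoped BigOperators

private lemma rpow_combine (T k p q : ℝ) (hT : 0 < T) (hk : 0 < k)
    (hp : p ≠ 0) (hq : q ≠ 0) :
    ((T ^ (1/p) * k ^ (-(1/p))) ^ (q - p) * T) ^ (1/q)
      = T ^ (1/p) * k ^ (1/q - 1/p) := by
  have e1 : (T ^ (1/p) * k ^ (-(1/p))) ^ (q - p)
      = T ^ ((q-p)/p) * k ^ (-((q-p)/p)) := by
    rw [Real.mul_rpow (by positivity) (by positivity),
      ← Real.rpow_mul hT.le, ← Real.rpow_mul hk.le]
    have a1 : 1/p * (q-p) = (q-p)/p := by ring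
    have a2 : -(1/p) * (q-p) = -((q-p)/p) := by ring
    rw [a1, a2]
  rw [e1, mul_right_comm, ← Real.rpow_add_one hT.ne',
    Real.mul_rpow (by positivity) (by positivity),
    ← Real.rpow_mul hT.le, ← Real.rpow_mul hk.le]
  have b1 : ((q-p)/p + 1) * (1/q) = 1/p := by field_simp; ring
  have b2 : -((q-p)/p) * (1/q) = 1/q - 1/p := by
    rw [eq_sub_iff_add_eq]; field_simp; ring
  rw [b1, b2]

/-- Weighted Stechkin inequality for Hilbert-valued sequences: if
`c ∈ ℓ^p_w(Λ;V)` with `0 < p < q ≤ 2` and `k ≥ sup_ν w_ν²`, then the weighted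
best `(k,w)`-term approximation error in the `ℓ^q_w`-norm satisfies
`σ_k(c)_{q,w;V} ≤ ‖c‖_{p,w;V} · k^{1/q − 1/p}`. -/
theorem weighted_stechkin {V : Type*} [NormedAddCommGroup V]
    [InnerProductSpace ℂ V] [CompleteSpace V] {ι : Type*} [Countable ι]
    (w : ι → ℝ) (hw : ∀ ν, 0 < w ν)
    (p q : ℝ) (hp : 0 < p) (hpq : p < q) (hq : q ≤ 2)
    (c : ι → V) (hsum : Summable fun ν => w ν ^ (2 - p) * ‖c ν‖ ^ p)
    (k : ℝ) (hk : ∀ ν, w ν ^ 2 ≤ k) :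
    sInf {r : ℝ | ∃ S : Set ι, (∑' ν : S, w (ν : ι) ^ 2) ≤ k ∧
        r = (∑' ν, Set.indicator Sᶜ (fun ν => w ν ^ (2 - q) * ‖c ν‖ ^ q) ν) ^ (1 / q)} ≤
      (∑' ν, w ν ^ (2 - p) * ‖c ν‖ ^ p) ^ (1 / p) * k ^ (1 / q - 1 / p) := by
  set g : ι → ℝ := fun ν => w ν ^ (2 - p) * ‖c ν‖ ^ p with hgdef
  set f : ι → ℝ := fun ν => w ν ^ (2 - q) * ‖c ν‖ ^ q with hfdef
  have hgnn : ∀ ν, 0 ≤ g ν := fun ν =>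
    mul_nonneg (Real.rpow_nonneg (hw ν).le _) (Real.rpow_nonneg (norm_nonneg _) _)
  have hfnn : ∀ ν, 0 ≤ f ν := fun ν =>
    mul_nonneg (Real.rpow_nonneg (hw ν).le _) (Real.rpow_nonneg (norm_nonneg _) _)
  have hbdd : BddBelow {r : ℝ | ∃ S : Set ι, (∑' ν : S, w (ν : ι) ^ 2) ≤ k ∧
      r = (∑' ν, Set.indicator Sᶜ f ν) ^ (1 / q)} := by
    refine ⟨0, fun r hr => ?_⟩
    obtain ⟨S, -, rfl⟩ := hr
    exact Real.rpow_nonneg (tsum_nonneg fun ν =>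
      Set.indicator_nonneg (fun ν _ => hfnn ν) ν) _
  rcases lt_or_ge k 0 with hk0 | hk0
  · -- k < 0: index set is empty, both sides are 0
    have hempty : {r : ℝ | ∃ S : Set ι, (∑' ν : S, w (ν : ι) ^ 2) ≤ k ∧
        r = (∑' ν, Set.indicator Sᶜ f ν) ^ (1 / q)} = ∅ := by
      ext r
      simp only [Set.mem_setOf_eq, Set.mem_empty_iff_false, iff_false, not_exists]
      rintro S ⟨hS, -⟩
      exact absurd (le_trans (tsum_nonneg fun ν => sq_nonneg _) hS) (not_le.2 hk0)
    have hι : IsEmpty ι := by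
      by_contra h
      rw [not_isEmpty_iff] at h
      obtain ⟨ν⟩ := h
      exact absurd (lt_of_le_of_lt (hk ν) hk0) (not_lt.2 (sq_nonneg _))
    rw [hempty, Real.sInf_empty, tsum_empty,
      Real.zero_rpow (one_div_ne_zero hp.ne'), zero_mul]
  by_cases hc : ∀ ν, c ν = 0
  · -- trivial case: c = 0
    have hg0 : ∀ ν, g ν = 0 := by
      intro ν
      simp [hgdef, hc ν, Real.zero_rpow hp.ne']
    have hf0 : ∀ ν, f ν = 0 := by
      intro ν
      simp [hfdef, hc ν, Real.zero_rpow (by linarith : q ≠ 0)]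
    have hmem : (0:ℝ) ∈ {r : ℝ | ∃ S : Set ι, (∑' ν : S, w (ν : ι) ^ 2) ≤ k ∧
        r = (∑' ν, Set.indicator Sᶜ f ν) ^ (1 / q)} := by
      refine ⟨∅, ?_, ?_⟩
      · simpa using hk0
      · have hfz : f = fun _ => 0 := funext hf0
        rw [Set.compl_empty, Set.indicator_univ, hfz, tsum_zero,
          Real.zero_rpow (one_div_ne_zero (by linarith : q ≠ 0))]
    refine le_trans (csInf_le hbdd hmem) ?_
    exact mul_nonneg (Real.rpow_nonneg (tsum_nonneg hgnn) _) (Real.rpow_nonneg hk0 _)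
  -- main case
  push_neg at hc
  obtain ⟨ν₀, hν₀⟩ := hc
  have hT : 0 < ∑' ν, g ν := by
    refine lt_of_lt_of_le ?_ (Summable.le_tsum hsum ν₀ fun ν _ => hgnn ν)
    have : 0 < ‖c ν₀‖ := norm_pos_iff.2 hν₀
    have := hw ν₀
    positivity
  have hkpos : 0 < k := lt_of_lt_of_le (by have := hw ν₀; positivity) (hk ν₀)
  set T := ∑' ν, g ν with hTdef
  set τ : ℝ := T ^ (1/p) * k ^ (-(1/p)) with hτdef
  have hτpos : 0 < τ := by positivity
  set S : Set ι := {ν | τ * w ν < ‖c ν‖} with hSdef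
  -- Claim A: weighted cardinality of S is at most k
  have hτpk : τ ^ (-p) * T = k := by
    rw [hτdef, Real.mul_rpow (by positivity) (by positivity),
      ← Real.rpow_mul hT.le, ← Real.rpow_mul hkpos.le]
    have e1 : 1/p * -p = -1 := by field_simp
    have e2 : -(1/p) * -p = 1 := by field_simp
    rw [e1, e2, Real.rpow_one, Real.rpow_neg_one, mul_right_comm,
      inv_mul_cancel₀ hT.ne', one_mul]
  have hptA : ∀ ν, S.indicator (fun ν => w ν ^ 2) ν ≤ τ ^ (-p) * g ν := by
    intro ν
    by_cases hν : ν ∈ S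
    · rw [Set.indicator_of_mem hν]
      have h1 : τ ^ p * w ν ^ p ≤ ‖c ν‖ ^ p := by
        rw [← Real.mul_rpow hτpos.le (hw ν).le]
        exact Real.rpow_le_rpow (mul_nonneg hτpos.le (hw ν).le) (le_of_lt hν) hp.le
      have h2 : τ ^ (-p) * (w ν ^ (2 - p) * (τ ^ p * w ν ^ p)) = w ν ^ 2 := by
        have : w ν ^ (2 - p) * w ν ^ p = w ν ^ 2 := by
          rw [← Real.rpow_add (hw ν), sub_add_cancel, ← Real.rpow_natCast (w ν) 2]
          norm_num
        rw [show τ ^ (-p) * (w ν ^ (2 - p) * (τ ^ p * w ν ^ p))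
            = (τ ^ (-p) * τ ^ p) * (w ν ^ (2 - p) * w ν ^ p) by ring,
          ← Real.rpow_add hτpos, neg_add_cancel, Real.rpow_zero, one_mul, this]
      calc w ν ^ 2 = τ ^ (-p) * (w ν ^ (2 - p) * (τ ^ p * w ν ^ p)) := h2.symm
        _ ≤ τ ^ (-p) * g ν := by
            refine mul_le_mul_of_nonneg_left ?_ (by positivity)
            exact mul_le_mul_of_nonneg_left h1 (Real.rpow_nonneg (hw ν).le _)
    · rw [Set.indicator_of_notMem hν]
      exact mul_nonneg (by positivity) (hgnn ν)
  have hsumA : Summable (fun ν => S.indicator (fun ν => w ν ^ 2) ν) :=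
    Summable.of_nonneg_of_le
      (fun ν => Set.indicator_nonneg (fun ν _ => sq_nonneg _) ν) hptA
      (hsum.mul_left _)
  have hA : (∑' ν : S, w (ν : ι) ^ 2) ≤ k := by
    rw [tsum_subtype S (fun ν => w ν ^ 2)]
    calc ∑' ν, S.indicator (fun ν => w ν ^ 2) ν
        ≤ ∑' ν, τ ^ (-p) * g ν := Summable.tsum_le_tsum hptA hsumA (hsum.mul_left _)
      _ = τ ^ (-p) * T := tsum_mul_left
      _ = k := hτpk
  -- Claim B: tail bound
  have hptB : ∀ ν, Set.indicator Sᶜ f ν ≤ τ ^ (q - p) * g ν := by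
    intro ν
    by_cases hν : ν ∈ Sᶜ
    · rw [Set.indicator_of_mem hν]
      have hle : ‖c ν‖ ≤ τ * w ν := not_lt.1 hν
      have h1 : ‖c ν‖ ^ (q - p) ≤ (τ * w ν) ^ (q - p) :=
        Real.rpow_le_rpow (norm_nonneg _) hle (by linarith)
      have h2 : ‖c ν‖ ^ q = ‖c ν‖ ^ (q - p) * ‖c ν‖ ^ p := by
        rw [← Real.rpow_add_of_nonneg (norm_nonneg _) (by linarith) hp.le,
          sub_add_cancel]
      calc f ν = w ν ^ (2 - q) * (‖c ν‖ ^ (q - p) * ‖c ν‖ ^ p) := by rw [hfdef]; simp [h2]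
        _ ≤ w ν ^ (2 - q) * ((τ * w ν) ^ (q - p) * ‖c ν‖ ^ p) := by
            refine mul_le_mul_of_nonneg_left ?_ (Real.rpow_nonneg (hw ν).le _)
            exact mul_le_mul_of_nonneg_right h1 (Real.rpow_nonneg (norm_nonneg _) _)
        _ = τ ^ (q - p) * g ν := by
            rw [Real.mul_rpow hτpos.le (hw ν).le, hgdef]
            have : w ν ^ (2 - q) * w ν ^ (q - p) = w ν ^ (2 - p) := by
              rw [← Real.rpow_add (hw ν)]; ring_nf
            calc w ν ^ (2 - q) * (τ ^ (q - p) * w ν ^ (q - p) * ‖c ν‖ ^ p)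
                = τ ^ (q - p) * ((w ν ^ (2 - q) * w ν ^ (q - p)) * ‖c ν‖ ^ p) := by ring
              _ = τ ^ (q - p) * (w ν ^ (2 - p) * ‖c ν‖ ^ p) := by rw [this]
    · rw [Set.indicator_of_notMem hν]
      exact mul_nonneg (by positivity) (hgnn ν)
  have hsumB : Summable (fun ν => Set.indicator Sᶜ f ν) :=
    Summable.of_nonneg_of_le
      (fun ν => Set.indicator_nonneg (fun ν _ => hfnn ν) ν) hptB (hsum.mul_left _)
  have hB : (∑' ν, Set.indicator Sᶜ f ν) ≤ τ ^ (q - p) * T := by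
    calc ∑' ν, Set.indicator Sᶜ f ν ≤ ∑' ν, τ ^ (q - p) * g ν :=
          Summable.tsum_le_tsum hptB hsumB (hsum.mul_left _)
      _ = τ ^ (q - p) * T := tsum_mul_left
  refine le_trans (csInf_le hbdd ⟨S, hA, rfl⟩) ?_
  calc (∑' ν, Set.indicator Sᶜ f ν) ^ (1 / q)
      ≤ (τ ^ (q - p) * T) ^ (1 / q) := by
        refine Real.rpow_le_rpow ?_ hB (le_of_lt (one_div_pos.mpr (by linarith)))
        exact tsum_nonneg fun ν => Set.indicator_nonneg (fun ν _ => hfnn ν) ν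
    _ = T ^ (1/p) * k ^ (1/q - 1/p) := by
        rw [hτdef]
        exact rpow_combine T k p q hT hkpos hp.ne' (by linarith)
end
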